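/- Fix $d \ge 3$ and $n \ge 2$. For any subspace $W$ of the degree-$n$ homogeneous component of the free Lie algebra over $\mathbb{F}_p$ on $d$ generators, the subspace $[W, L^1]$ spanned by all brackets $[w, x_i]$ with $w \in W$ and $1 \le i \le d$ has dimension at least $(3/2)\dim(W)$. -/

import Mathlib

/-- The generator `x_i` of the free associative algebra `K⟨x_1,…,x_d⟩`,
realized as the monoid algebra of the free monoid. -/
noncomputable def freeGen (K : Type*) [Field K] {d : ℕ} (i : Fin d) :
    MonoidAlgebra K (FreeMonoid (Fin d)) :=
  MonoidAlgebra.single (FreeMonoid.of i) 1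

/-- The degree-`n` homogeneous components of the free Lie algebra on `x_1,…,x_d`
inside the free associative algebra, with bracket `[f,g] = fg - gf`:
`lieComponent K d 0 = K[Λ¹]` is the span of the generators, and
`lieComponent K d n = K[Λ^{n+1}]` is the span of brackets `[f, x_i]` together with
the brackets needed for the Lie algebra structure; since the free Lie algebra is
generated in degree one, `K[Λ^{n+1}] = [K[Λ^n], K[Λ¹]]`. -/
noncomputable def lieComponent (K : Type*) [Field K] (d : ℕ) :
    ℕ → Submodule K (MonoidAlgebra K (FreeMonoid (Fin d)))
  | 0 => Submodule.span K (Set.range (freeGen K))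
  | n + 1 => Submodule.span K
      {x | ∃ f ∈ lieComponent K d n, ∃ i : Fin d,
        x = f * freeGen K i - freeGen K i * f}

section Aux13


open MonoidAlgebra FreeMonoid

variable {α : Type*} [LinearOrder α]

noncomputable instance : LinearOrder (FreeMonoid α) := inferInstanceAs (LinearOrder (List α))

lemma lex_cons_iff' {a b : α} {l l' : List α} :
    (a :: l) < (b :: l') ↔ a < b ∨ (a = b ∧ l < l') := by
  constructor
  · intro h
    cases (show List.Lex (· < ·) (a :: l) (b :: l') from h) with
    | cons h => exact Or.inr ⟨rfl, h⟩
    | rel h => exact Or.inl h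
  · rintro (h | ⟨rfl, h⟩)
    · exact List.Lex.rel h
    · exact List.Lex.cons h

lemma lex_append_iff : ∀ {x y : List α}, x.length = y.length →
    ∀ {t t' : List α}, (x ++ t < y ++ t' ↔ x < y ∨ (x = y ∧ t < t'))
  | [], [], _, t, t' => by
    constructor
    · intro h; exact Or.inr ⟨rfl, h⟩
    · rintro (h | ⟨-, h⟩)
      · exact absurd h (List.not_lt_nil _)
      · exact h
  | a :: x, b :: y, hl, t, t' => by
    have hlen : x.length = y.length := by simpa using hl
    show (a :: (x ++ t)) < (b :: (y ++ t')) ↔ _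
    rw [lex_cons_iff', lex_append_iff hlen, lex_cons_iff']
    constructor
    · rintro (h | ⟨rfl, (h | ⟨rfl, h⟩)⟩)
      · exact Or.inl (Or.inl h)
      · exact Or.inl (Or.inr ⟨rfl, h⟩)
      · exact Or.inr ⟨rfl, h⟩
    · rintro ((h | ⟨rfl, h⟩) | ⟨h, h'⟩)
      · exact Or.inl h
      · exact Or.inr ⟨rfl, Or.inl h⟩
      · rw [List.cons.injEq] at h
        obtain ⟨rfl, rfl⟩ := h
        exact Or.inr ⟨rfl, Or.inr ⟨rfl, h'⟩⟩

omit [LinearOrder α] in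
lemma concat_eq_cons_rep : ∀ (v : List α) (a : α), v ++ [a] = a :: v →
    v = List.replicate v.length a
  | [], _, _ => rfl
  | b :: v, a, h => by
    simp only [List.cons_append, List.cons.injEq] at h
    obtain ⟨rfl, h⟩ := h
    simp only [List.length_cons, List.replicate_succ, List.cons.injEq, true_and]
    exact concat_eq_cons_rep v b h

-- FreeMonoid-level order helpers
lemma fm_mul_of_lt {u s : FreeMonoid α} (h : u < s)
    (hl : u.toList.length = s.toList.length) (a c : α) : u * of a < s * of c :=
  (lex_append_iff hl).mpr (Or.inl h)

lemma fm_mul_of_le {u s : FreeMonoid α} (h : u ≤ s)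
    (hl : u.toList.length = s.toList.length) (a : α) : u * of a ≤ s * of a := by
  rcases h.lt_or_eq with h' | rfl
  · exact (fm_mul_of_lt h' hl a a).le
  · exact le_rfl

lemma fm_of_mul_lt_iff {u s : FreeMonoid α} (a : α) : of a * u < of a * s ↔ u < s := by
  show (a :: u.toList) < (a :: s.toList) ↔ _
  rw [lex_cons_iff']
  simp [lt_irrefl]
  exact Iff.rfl

lemma fm_of_mul_le {u s : FreeMonoid α} (h : u ≤ s) (a : α) : of a * u ≤ of a * s := by
  rcases h.lt_or_eq with h' | rfl
  · exact ((fm_of_mul_lt_iff a).mpr h').le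
  · exact le_rfl

lemma fm_strip_last {u s : FreeMonoid α} (a : α)
    (hl : u.toList.length = s.toList.length) (h : u * of a < s * of a) : u < s := by
  rcases (lex_append_iff hl).mp h with h' | ⟨-, h'⟩
  · exact h'
  · exact absurd h' (lt_irrefl _)

section Coeff
variable {K : Type*} [Semiring K]

lemma coeff_mul_gen (f : MonoidAlgebra K (FreeMonoid α)) (a : α) (y : FreeMonoid α) :
    (f * single (of a) 1 : MonoidAlgebra K (FreeMonoid α)).coeff (y * of a) = f.coeff y := by
  rw [MonoidAlgebra.coeff_mul_single_eq_coeff_mul (x := f) y (fun b _ => mul_left_inj _), mul_one]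

lemma coeff_mul_gen_zero (f : MonoidAlgebra K (FreeMonoid α)) (a : α) (z : FreeMonoid α)
    (h : ¬∃ y, z = y * of a) :
    (f * single (of a) 1 : MonoidAlgebra K (FreeMonoid α)).coeff z = 0 :=
  MonoidAlgebra.mul_single_apply_of_not_exists_mul 1 f h

lemma coeff_gen_mul (f : MonoidAlgebra K (FreeMonoid α)) (a : α) (y : FreeMonoid α) :
    (single (of a) 1 * f : MonoidAlgebra K (FreeMonoid α)).coeff (of a * y) = f.coeff y := by
  rw [MonoidAlgebra.coeff_single_mul_eq_mul_coeff (x := f) y (fun b _ => mul_right_inj _), one_mul]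

lemma coeff_gen_mul_zero (f : MonoidAlgebra K (FreeMonoid α)) (a : α) (z : FreeMonoid α)
    (h : ¬∃ y, z = of a * y) :
    (single (of a) 1 * f : MonoidAlgebra K (FreeMonoid α)).coeff z = 0 :=
  MonoidAlgebra.single_mul_apply_of_not_exists_mul 1 f h

lemma supp_mul_gen {f : MonoidAlgebra K (FreeMonoid α)} {a : α} {x : FreeMonoid α}
    (hx : x ∈ (f * single (of a) 1 : MonoidAlgebra K (FreeMonoid α)).coeff.support) :
    ∃ s ∈ f.coeff.support, x = s * of a := by
  classical
  have := MonoidAlgebra.support_coeff_mul_single_subset f 1 (of a) hx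
  simpa [eq_comm] using Finset.mem_image.mp this

lemma supp_gen_mul {f : MonoidAlgebra K (FreeMonoid α)} {a : α} {x : FreeMonoid α}
    (hx : x ∈ (single (of a) 1 * f : MonoidAlgebra K (FreeMonoid α)).coeff.support) :
    ∃ s ∈ f.coeff.support, x = of a * s := by
  classical
  have := MonoidAlgebra.support_coeff_single_mul_subset f 1 (of a) hx
  simpa [eq_comm] using Finset.mem_image.mp this

end Coeff

/-- `u` is the minimal word of `f`, with nonzero coefficient. -/
def MinWord {K : Type*} [Semiring K] (u : FreeMonoid α) (f : MonoidAlgebra K (FreeMonoid α)) :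
    Prop :=
  (∀ x ∈ f.coeff.support, u ≤ x) ∧ f.coeff u ≠ 0

lemma bracket_minWord {K : Type*} [Ring K] {n : ℕ} (hn : 1 ≤ n)
    {w : MonoidAlgebra K (FreeMonoid α)}
    (hlen : ∀ x ∈ w.coeff.support, x.toList.length = n)
    (hpow : ∀ a : α, w.coeff (ofList (List.replicate n a)) = 0)
    {u : FreeMonoid α} (hu : MinWord u w) (a : α) :
    MinWord (min (u * of a) (of a * u))
      (w * single (of a) 1 - single (of a) 1 * w : MonoidAlgebra K (FreeMonoid α)) := by
  have husupp : u ∈ w.coeff.support := Finsupp.mem_support_iff.mpr hu.2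
  have hul : u.toList.length = n := hlen u husupp
  have hune : u.toList ≠ [] := by
    intro h; rw [h] at hul; simp at hul; omega
  have hne : u * of a ≠ of a * u := by
    intro h
    have h' : u.toList ++ [a] = a :: u.toList := h
    have h2 := concat_eq_cons_rep u.toList a h'
    have h3 : u = ofList (List.replicate n a) := by
      show ofList u.toList = _
      rw [h2, hul]
    exact hu.2 (by rw [h3]; exact hpow a)
  rcases lt_or_gt_of_ne hne with hlt | hgt
  · rw [min_eq_left hlt.le]
    refine ⟨?_, ?_⟩
    · intro x hx
      rcases Finset.mem_union.mp (Finsupp.support_sub hx) with hx' | hx'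
      · obtain ⟨s, hs, rfl⟩ := supp_mul_gen hx'
        exact fm_mul_of_le (hu.1 s hs) (by rw [hul, hlen s hs]) a
      · obtain ⟨s, hs, rfl⟩ := supp_gen_mul hx'
        exact hlt.le.trans (fm_of_mul_le (hu.1 s hs) a)
    · rw [MonoidAlgebra.coeff_sub, Finsupp.sub_apply, coeff_mul_gen]
      obtain ⟨c, u', hcu⟩ := List.exists_cons_of_ne_nil hune
      by_cases hca : c = a
      · subst hca
        have hsplit : u * of c = of c * (ofList (u' ++ [c])) := by
          have : u.toList ++ [c] = c :: (u' ++ [c]) := by rw [hcu]; rfl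
          exact this
        rw [hsplit, coeff_gen_mul]
        have hlt' : ofList (u' ++ [c]) < u := by
          have h5 : of c * (ofList (u' ++ [c])) < of c * u := by rw [← hsplit]; exact hlt
          exact (fm_of_mul_lt_iff c).mp h5
        have hnotin : ofList (u' ++ [c]) ∉ w.coeff.support :=
          fun hmem => absurd hlt' (not_lt.mpr (hu.1 _ hmem))
        rw [Finsupp.notMem_support_iff.mp hnotin, sub_zero]
        exact hu.2
      · rw [coeff_gen_mul_zero, sub_zero]
        · exact hu.2
        · rintro ⟨y, hy⟩
          have h6 : u.toList ++ [a] = a :: y.toList := hy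
          rw [hcu] at h6
          simp only [List.cons_append, List.cons.injEq] at h6
          exact hca h6.1
  · rw [min_eq_right hgt.le]
    refine ⟨?_, ?_⟩
    · intro x hx
      rcases Finset.mem_union.mp (Finsupp.support_sub hx) with hx' | hx'
      · obtain ⟨s, hs, rfl⟩ := supp_mul_gen hx'
        exact hgt.le.trans (fm_mul_of_le (hu.1 s hs) (by rw [hul, hlen s hs]) a)
      · obtain ⟨s, hs, rfl⟩ := supp_gen_mul hx'
        exact fm_of_mul_le (hu.1 s hs) a
    · rw [MonoidAlgebra.coeff_sub, Finsupp.sub_apply, coeff_gen_mul]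
      obtain ⟨l, c, hlc⟩ : ∃ l c, u.toList = l ++ [c] := by
        rcases List.eq_nil_or_concat u.toList with h' | ⟨l, c, h'⟩
        · exact absurd h' hune
        · exact ⟨l, c, by simpa using h'⟩
      by_cases hca : c = a
      · subst hca
        have hsplit : of c * u = (ofList (c :: l)) * of c := by
          have : c :: u.toList = (c :: l) ++ [c] := by rw [hlc]; rfl
          exact this
        rw [hsplit, coeff_mul_gen]
        have hlt' : ofList (c :: l) < u := by
          have hlen' : (c :: l).length = u.toList.length := by
            rw [hlc]; simp
          have h5 : ofList (c :: l) * of c < u * of c := by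
            rw [← hsplit]; exact hgt
          exact fm_strip_last c hlen' h5
        have hnotin : ofList (c :: l) ∉ w.coeff.support :=
          fun hmem => absurd hlt' (not_lt.mpr (hu.1 _ hmem))
        rw [Finsupp.notMem_support_iff.mp hnotin, zero_sub]
        exact neg_ne_zero.mpr hu.2
      · rw [coeff_mul_gen_zero, zero_sub]
        · exact neg_ne_zero.mpr hu.2
        · rintro ⟨y, hy⟩
          have h6 : a :: u.toList = y.toList ++ [a] := hy
          rw [hlc] at h6
          have h7 : (a :: l) ++ [c] = y.toList ++ [a] := by
            rw [← h6]; rfl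
          have h8 := List.append_inj h7 (by
            have := congrArg List.length h7
            simpa using this)
          simp only [List.cons.injEq, and_true] at h8
          exact hca (by simpa using h8.2)

section Structural
variable (K : Type*) [Field K]

/-- Elements supported on words of length `k`. -/
def homogSub (k : ℕ) : Submodule K (MonoidAlgebra K (FreeMonoid α)) where
  carrier := {f | ∀ x ∈ f.coeff.support, (FreeMonoid.toList x).length = k}
  add_mem' := by
    intro f g hf hg x hx
    rcases Finset.mem_union.mp (Finsupp.support_add hx) with h | h
    · exact hf x h
    · exact hg x h
  zero_mem' := by
    intro x hx
    simp [Finsupp.support_zero] at hx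
  smul_mem' := by
    intro c f hf x hx
    exact hf x (Finsupp.support_smul hx)

/-- Elements with vanishing coefficients at all powers `a^n`. -/
def powFree (n : ℕ) : Submodule K (MonoidAlgebra K (FreeMonoid α)) where
  carrier := {f | ∀ a : α, f.coeff (ofList (List.replicate n a)) = 0}
  add_mem' := by
    intro f g hf hg a
    rw [MonoidAlgebra.coeff_add, Finsupp.add_apply, hf a, hg a, add_zero]
  zero_mem' := by intro a; rfl
  smul_mem' := by
    intro c f hf a
    rw [MonoidAlgebra.coeff_smul, Finsupp.smul_apply, hf a, smul_zero]

variable {d : ℕ}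

lemma lieComponent_le_homog (k : ℕ) :
    lieComponent K d k ≤ homogSub K (k + 1) := by
  induction k with
  | zero =>
    rw [lieComponent, Submodule.span_le]
    rintro _ ⟨i, rfl⟩ x hx
    have := Finsupp.support_single_subset hx
    simp only [Finset.mem_singleton] at this
    subst this
    rfl
  | succ k ih =>
    rw [lieComponent, Submodule.span_le]
    rintro _ ⟨f, hf, i, rfl⟩ x hx
    rcases Finset.mem_union.mp (Finsupp.support_sub hx) with h | h
    · obtain ⟨s, hs, rfl⟩ := supp_mul_gen h
      have := ih hf s hs
      show (s.toList ++ [i]).length = k + 2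
      simp [this]
    · obtain ⟨s, hs, rfl⟩ := supp_gen_mul h
      have := ih hf s hs
      show (i :: s.toList).length = k + 2
      simp [this]

lemma lieComponent_le_powFree (k : ℕ) (hk : 1 ≤ k) :
    lieComponent K d k ≤ powFree K (k + 1) := by
  obtain ⟨j, rfl⟩ : ∃ j, k = j + 1 := ⟨k - 1, by omega⟩
  rw [lieComponent, Submodule.span_le]
  rintro _ ⟨f, hf, i, rfl⟩ a
  simp only [freeGen]
  rw [MonoidAlgebra.coeff_sub, Finsupp.sub_apply]
  by_cases hia : i = a
  · subst hia
    have h1 : ofList (List.replicate (j + 1 + 1) i) = ofList (List.replicate (j + 1) i) * of i := by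
      show List.replicate (j + 1 + 1) i = List.replicate (j + 1) i ++ [i]
      rw [← List.replicate_succ']
    have h2 : ofList (List.replicate (j + 1 + 1) i) = of i * ofList (List.replicate (j + 1) i) := by
      show List.replicate (j + 1 + 1) i = i :: List.replicate (j + 1) i
      rw [← List.replicate_succ]
    rw [h1, coeff_mul_gen, ← h1, h2, coeff_gen_mul, sub_self]
  · rw [coeff_mul_gen_zero, coeff_gen_mul_zero, sub_self]
    · rintro ⟨y, hy⟩
      have h6 : List.replicate (j + 1 + 1) a = i :: y.toList := hy
      have : a = i := by
        have := congrArg (List.headD · a) h6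
        simpa [List.replicate_succ] using this
      exact hia this.symm
    · rintro ⟨y, hy⟩
      have h6 : List.replicate (j + 1 + 1) a = y.toList ++ [i] := hy
      rw [List.replicate_succ'] at h6
      have h8 := List.append_inj h6 (by
        have := congrArg List.length h6
        simpa using this)
      have : a = i := by simpa using h8.2
      exact hia this.symm

/-- Finite-dimensionality from support bounds. -/
lemma fd_of_support_le {V : Submodule K (MonoidAlgebra K (FreeMonoid α))}
    (s : Finset (FreeMonoid α)) (hs : ∀ f ∈ V, ∀ x ∈ f.coeff.support, x ∈ s) :
    FiniteDimensional K V := by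
  have hle : V ≤ Submodule.span K
      ((fun x => (single x 1 : MonoidAlgebra K (FreeMonoid α))) '' ↑s) := by
    intro f hf
    have hrepr : (f.coeff.sum fun x c => single x c) = f := MonoidAlgebra.sum_coeff_single f
    rw [← hrepr]
    apply Submodule.sum_mem
    intro x hx
    have h1 : (single x (f.coeff x) : MonoidAlgebra K (FreeMonoid α))
        = f.coeff x • (single x (1 : K)) := by
      rw [MonoidAlgebra.smul_single, smul_eq_mul, mul_one]
    show (single x (f.coeff x) : MonoidAlgebra K (FreeMonoid α)) ∈ _
    rw [h1]
    exact Submodule.smul_mem _ _ (Submodule.subset_span ⟨x, hs f hf x hx, rfl⟩)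
  haveI : FiniteDimensional K
      (Submodule.span K ((fun x => (single x 1 : MonoidAlgebra K (FreeMonoid α))) '' ↑s)) :=
    FiniteDimensional.span_of_finite K (s.finite_toSet.image _)
  exact Submodule.finiteDimensional_of_le hle

end Structural

/-- All words of length `k` as a finset. -/
noncomputable def wordFinset (d k : ℕ) : Finset (FreeMonoid (Fin d)) :=
  (Finset.univ : Finset (List.Vector (Fin d) k)).image (fun v => FreeMonoid.ofList v.toList)

lemma mem_wordFinset {d k : ℕ} (u : FreeMonoid (Fin d)) (h : u.toList.length = k) :
    u ∈ wordFinset d k :=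
  Finset.mem_image.mpr ⟨⟨u.toList, h⟩, Finset.mem_univ _, rfl⟩

section Echelon
variable {K : Type*} [Field K]

/-- Evaluation at a word, as a linear map. -/
def coeffLin (K : Type*) [Field K] (u : FreeMonoid α) :
    MonoidAlgebra K (FreeMonoid α) →ₗ[K] K where
  toFun f := f.coeff u
  map_add' f g := Finsupp.add_apply f.coeff g.coeff u
  map_smul' c f := Finsupp.smul_apply c f.coeff u

lemma exists_echelon (t : ℕ) (V : Submodule K (MonoidAlgebra K (FreeMonoid α)))
    (s : Finset (FreeMonoid α)) (hs : ∀ f ∈ V, ∀ x ∈ f.coeff.support, x ∈ s)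
    (ht : Module.finrank K V = t) :
    ∃ T : Finset (FreeMonoid α), T.card = t ∧ ∀ u ∈ T, ∃ w ∈ V, MinWord u w := by
  classical
  induction t generalizing V with
  | zero => exact ⟨∅, rfl, by simp⟩
  | succ t ih =>
    haveI : FiniteDimensional K V := fd_of_support_le K s hs
    have hVbot : V ≠ ⊥ := by
      intro h
      rw [h, finrank_bot] at ht
      omega
    obtain ⟨v0, hv0V, hv0⟩ := Submodule.exists_mem_ne_zero_of_ne_bot hVbot
    let cand : Finset (FreeMonoid α) := s.filter (fun u => ∃ f ∈ V, f.coeff u ≠ 0)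
    have hcand_ne : cand.Nonempty := by
      obtain ⟨x, hx⟩ := Finsupp.support_nonempty_iff.mpr (fun h => hv0 (MonoidAlgebra.coeff_eq_zero.mp h))
      exact ⟨x, Finset.mem_filter.mpr ⟨hs v0 hv0V x hx, v0, hv0V, Finsupp.mem_support_iff.mp hx⟩⟩
    set u0 := cand.min' hcand_ne with hu0def
    obtain ⟨w0, hw0V, hw0⟩ := (Finset.mem_filter.mp (cand.min'_mem hcand_ne)).2
    have hmin : ∀ f ∈ V, ∀ x ∈ f.coeff.support, u0 ≤ x := by
      intro f hf x hx
      exact cand.min'_le x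
        (Finset.mem_filter.mpr ⟨hs f hf x hx, f, hf, Finsupp.mem_support_iff.mp hx⟩)
    set V' := V ⊓ LinearMap.ker (coeffLin K u0) with hV'def
    have hV'le : V' ≤ V := inf_le_left
    have hV'rank : Module.finrank K V' = t := by
      set φ := (coeffLin K u0).comp V.subtype with hφ
      have hker : V' = Submodule.map V.subtype (LinearMap.ker φ) := by
        ext f
        constructor
        · rintro ⟨hfV, hfk⟩
          exact ⟨⟨f, hfV⟩, hfk, rfl⟩
        · rintro ⟨⟨g, hgV⟩, hgk, rfl⟩
          exact ⟨hgV, hgk⟩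
      have hrange : LinearMap.range φ = ⊤ := by
        rw [Submodule.eq_top_iff']
        intro c
        have h1 : φ ⟨w0, hw0V⟩ = w0.coeff u0 := rfl
        have h2 : φ ((c * (w0.coeff u0)⁻¹) • ⟨w0, hw0V⟩) = c := by
          rw [map_smul, h1, smul_eq_mul, mul_assoc, inv_mul_cancel₀ hw0, mul_one]
        exact ⟨_, h2⟩
      have hrn := LinearMap.finrank_range_add_finrank_ker φ
      rw [hrange, finrank_top, Module.finrank_self] at hrn
      have : Module.finrank K V' = Module.finrank K (LinearMap.ker φ) := by
        rw [hker, Submodule.finrank_map_subtype_eq]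
      omega
    obtain ⟨T', hT'card, hT'⟩ := ih V' (fun f hf => hs f (hV'le hf)) hV'rank
    have hu0T' : u0 ∉ T' := by
      intro hmem
      obtain ⟨w, hwV', hw⟩ := hT' u0 hmem
      exact hw.2 hwV'.2
    refine ⟨insert u0 T', ?_, ?_⟩
    · rw [Finset.card_insert_of_notMem hu0T', hT'card]
    · intro u hu
      rcases Finset.mem_insert.mp hu with rfl | hu
      · exact ⟨w0, hw0V, hmin w0 hw0V, hw0⟩
      · obtain ⟨w, hwV', hw⟩ := hT' u hu
        exact ⟨w, hV'le hwV', hw⟩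

lemma linearIndependent_of_minWords {F : Finset (FreeMonoid α)}
    {g : FreeMonoid α → MonoidAlgebra K (FreeMonoid α)}
    (hg : ∀ u ∈ F, MinWord u (g u)) :
    LinearIndependent K (fun u : F => g u) := by
  rw [linearIndependent_iff']
  intro sfin c hsum i hi
  by_contra hci
  classical
  set ne := sfin.filter (fun j => c j ≠ 0) with hne_def
  have hne : ne.Nonempty := ⟨i, Finset.mem_filter.mpr ⟨hi, hci⟩⟩
  have hneim : (ne.image (fun j : F => (j : FreeMonoid α))).Nonempty := hne.image _
  obtain ⟨j0, hj0ne, hj0⟩ := Finset.mem_image.mp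
    ((ne.image (fun j : F => (j : FreeMonoid α))).min'_mem hneim)
  set b0 := (ne.image (fun j : F => (j : FreeMonoid α))).min' hneim with hb0
  have heval := congrArg (coeffLin K b0) hsum
  rw [map_sum, map_zero] at heval
  have hterm : ∀ j ∈ sfin, j ≠ j0 → coeffLin K b0 (c j • g (j : FreeMonoid α)) = 0 := by
    intro j hj hjj0
    by_cases hcj : c j = 0
    · rw [hcj, zero_smul, map_zero]
    · have hjne : j ∈ ne := Finset.mem_filter.mpr ⟨hj, hcj⟩
      have hble : b0 ≤ (j : FreeMonoid α) :=
        Finset.min'_le _ _ (Finset.mem_image_of_mem _ hjne)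
      have hblt : b0 < (j : FreeMonoid α) := by
        rcases hble.lt_or_eq with h | h
        · exact h
        · have hcoe : (j : FreeMonoid α) = (j0 : FreeMonoid α) := by rw [← h, hj0]
          exact (hjj0 (Subtype.coe_injective hcoe)).elim
      have hz : (g (j : FreeMonoid α)).coeff b0 = 0 := by
        by_contra hnz
        have := (hg j j.2).1 b0 (Finsupp.mem_support_iff.mpr hnz)
        exact absurd this (not_le.mpr hblt)
      show c j • (g (j : FreeMonoid α)).coeff b0 = 0
      rw [hz, smul_zero]
  rw [Finset.sum_eq_single j0 hterm (by intro h; exact absurd (Finset.mem_filter.mp hj0ne).1 h)]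
    at heval
  have hj0c : c j0 ≠ 0 := (Finset.mem_filter.mp hj0ne).2
  have hj0g : (g (j0 : FreeMonoid α)).coeff b0 ≠ 0 := by
    rw [← hj0]; exact (hg j0 j0.2).2
  have : coeffLin K b0 (c j0 • g (j0 : FreeMonoid α)) = c j0 * (g (j0 : FreeMonoid α)).coeff b0 := rfl
  rw [this] at heval
  exact (mul_ne_zero hj0c hj0g) heval

lemma card_le_finrank {S : Submodule K (MonoidAlgebra K (FreeMonoid α))}
    [FiniteDimensional K S] {F : Finset (FreeMonoid α)}
    {g : FreeMonoid α → MonoidAlgebra K (FreeMonoid α)}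
    (hg : ∀ u ∈ F, MinWord u (g u)) (hgS : ∀ u ∈ F, g u ∈ S) :
    F.card ≤ Module.finrank K S := by
  have hli := linearIndependent_of_minWords hg
  have hspan : Submodule.span K (Set.range (fun u : F => g u)) ≤ S := by
    rw [Submodule.span_le]
    rintro _ ⟨u, rfl⟩
    exact hgS u u.2
  calc F.card = Fintype.card F := (Fintype.card_coe F).symm
    _ = Module.finrank K (Submodule.span K (Set.range (fun u : F => g u))) :=
        (finrank_span_eq_card hli).symm
    _ ≤ Module.finrank K S := Submodule.finrank_mono hspan

end Echelon

end Aux13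

/-- For `d ≥ 3` and `n ≥ 2`, any subspace `W` of the degree-`n` homogeneous
component of the free Lie algebra over `𝔽_p` on `d` generators satisfies
`dim [W, L¹] ≥ (3/2) dim W`, where `[W, L¹]` is the span of all `[w, x_i]`.
(Degree `n = m + 1` corresponds to `lieComponent _ d m`, so `n ≥ 2` is `m ≥ 1`.) -/
theorem stmt_13 (p : ℕ) [Fact p.Prime] (d : ℕ) (hd : 3 ≤ d) (m : ℕ) (hm : 1 ≤ m)
    (W : Submodule (ZMod p) (MonoidAlgebra (ZMod p) (FreeMonoid (Fin d))))
    (hW : W ≤ lieComponent (ZMod p) d m) :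
    3 * Module.finrank (ZMod p) W ≤
      2 * Module.finrank (ZMod p)
        (Submodule.span (ZMod p)
          {x | ∃ w ∈ W, ∃ i : Fin d,
            x = w * freeGen (ZMod p) i - freeGen (ZMod p) i * w}) := by
  classical
  set n := m + 1 with hn
  have hWhom : ∀ f ∈ W, ∀ x ∈ f.coeff.support, (FreeMonoid.toList x).length = n :=
    fun f hf x hx => lieComponent_le_homog (ZMod p) m (hW hf) x hx
  have hWpow : ∀ f ∈ W, ∀ a : Fin d, f.coeff (FreeMonoid.ofList (List.replicate n a)) = 0 :=
    fun f hf a => lieComponent_le_powFree (ZMod p) m hm (hW hf) a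
  haveI : FiniteDimensional (ZMod p) W :=
    fd_of_support_le _ (wordFinset d n) (fun f hf x hx => mem_wordFinset x (hWhom f hf x hx))
  obtain ⟨T, hTcard, hT⟩ := exists_echelon (Module.finrank (ZMod p) W) W (wordFinset d n)
      (fun f hf x hx => mem_wordFinset x (hWhom f hf x hx)) rfl
  choose wit hwitW hwitMin using hT
  set SP : Set (MonoidAlgebra (ZMod p) (FreeMonoid (Fin d))) :=
    {x | ∃ w ∈ W, ∃ i : Fin d, x = w * freeGen (ZMod p) i - freeGen (ZMod p) i * w} with hSP
  set S := Submodule.span (ZMod p) SP with hS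
  have hSPlen : ∀ f ∈ SP, ∀ x ∈ f.coeff.support, (FreeMonoid.toList x).length = n + 1 := by
    rintro _ ⟨w, hw, i, rfl⟩ x hx
    rcases Finset.mem_union.mp (Finsupp.support_sub hx) with h | h
    · obtain ⟨s, hs, rfl⟩ := supp_mul_gen h
      show (s.toList ++ [i]).length = n + 1
      simp [hWhom w hw s hs]
    · obtain ⟨s, hs, rfl⟩ := supp_gen_mul h
      show (i :: s.toList).length = n + 1
      simp [hWhom w hw s hs]
  have hShom : S ≤ homogSub (ZMod p) (n + 1) := by
    rw [hS, Submodule.span_le]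
    intro f hf
    exact fun x hx => hSPlen f hf x hx
  haveI : FiniteDimensional (ZMod p) S :=
    fd_of_support_le _ (wordFinset d (n + 1))
      (fun f hf x hx => mem_wordFinset x (hShom hf x hx))
  set μ : FreeMonoid (Fin d) × Fin d → FreeMonoid (Fin d) :=
    fun q => min (q.1 * FreeMonoid.of q.2) (FreeMonoid.of q.2 * q.1) with hμ
  set P := T ×ˢ (Finset.univ : Finset (Fin d)) with hP
  set F := P.image μ with hF
  have a0 : Fin d := ⟨0, by omega⟩
  have hfib : ∀ b ∈ F, (P.filter (fun q => μ q = b)).card ≤ 2 := by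
    intro b hb
    set p1 : FreeMonoid (Fin d) × Fin d :=
      (FreeMonoid.ofList b.toList.dropLast, b.toList.getLast?.getD a0) with hp1
    set p2 : FreeMonoid (Fin d) × Fin d :=
      (FreeMonoid.ofList b.toList.tail, b.toList.headD a0) with hp2
    have hsub : P.filter (fun q => μ q = b) ⊆ {p1, p2} := by
      intro q hq
      obtain ⟨-, hqb⟩ := Finset.mem_filter.mp hq
      rcases min_choice (q.1 * FreeMonoid.of q.2) (FreeMonoid.of q.2 * q.1) with hc | hc
      · have hb1 : b = q.1 * FreeMonoid.of q.2 := by rw [← hqb]; exact hc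
        have hbl : b.toList = q.1.toList ++ [q.2] := congrArg FreeMonoid.toList hb1
        have h1 : q.1 = FreeMonoid.ofList b.toList.dropLast := by
          show q.1 = FreeMonoid.ofList b.toList.dropLast
          rw [hbl, List.dropLast_concat]
          rfl
        have h2 : q.2 = b.toList.getLast?.getD a0 := by
          rw [hbl, List.getLast?_concat]
          rfl
        apply Finset.mem_insert.mpr
        left
        exact Prod.ext h1 h2
      · have hb1 : b = FreeMonoid.of q.2 * q.1 := by rw [← hqb]; exact hc
        have hbl : b.toList = q.2 :: q.1.toList := congrArg FreeMonoid.toList hb1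
        have h1 : q.1 = FreeMonoid.ofList b.toList.tail := by rw [hbl]; rfl
        have h2 : q.2 = b.toList.headD a0 := by rw [hbl]; rfl
        apply Finset.mem_insert.mpr
        right
        exact Finset.mem_singleton.mpr (Prod.ext h1 h2)
    exact (Finset.card_le_card hsub).trans Finset.card_le_two
  have hcount : T.card * d ≤ 2 * F.card := by
    have h := Finset.card_le_mul_card_image (f := μ) P 2 hfib
    rwa [hP, Finset.card_product, Finset.card_univ, Fintype.card_fin, ← hP, ← hF] at h
  have hFwit : ∀ b ∈ F, ∃ q : FreeMonoid (Fin d) × Fin d, q.1 ∈ T ∧ μ q = b := by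
    intro b hb
    obtain ⟨q, hq, hqb⟩ := Finset.mem_image.mp hb
    exact ⟨q, (Finset.mem_product.mp hq).1, hqb⟩
  choose qb hqbT hqbμ using hFwit
  set g : FreeMonoid (Fin d) → MonoidAlgebra (ZMod p) (FreeMonoid (Fin d)) := fun b =>
    if hb : b ∈ F then
      wit (qb b hb).1 (hqbT b hb) * freeGen (ZMod p) (qb b hb).2
        - freeGen (ZMod p) (qb b hb).2 * wit (qb b hb).1 (hqbT b hb)
    else 0 with hg
  have hgmin : ∀ b ∈ F, MinWord b (g b) := by
    intro b hb
    have hwW : wit (qb b hb).1 (hqbT b hb) ∈ W := hwitW _ _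
    have hbm := bracket_minWord (n := n) (by omega)
      (hWhom _ hwW) (hWpow _ hwW) (hwitMin _ (hqbT b hb)) (qb b hb).2
    have heq : min ((qb b hb).1 * FreeMonoid.of (qb b hb).2)
        (FreeMonoid.of (qb b hb).2 * (qb b hb).1) = b := hqbμ b hb
    rw [heq] at hbm
    rw [hg]
    simp only [dif_pos hb]
    exact hbm
  have hgS : ∀ b ∈ F, g b ∈ S := by
    intro b hb
    rw [hg]
    simp only [dif_pos hb]
    exact Submodule.subset_span ⟨wit _ _, hwitW _ _, (qb b hb).2, rfl⟩
  have hFle : F.card ≤ Module.finrank (ZMod p) S := card_le_finrank hgmin hgS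
  calc 3 * Module.finrank (ZMod p) W = 3 * T.card := by rw [hTcard]
    _ ≤ d * T.card := Nat.mul_le_mul_right _ hd
    _ = T.card * d := Nat.mul_comm _ _
    _ ≤ 2 * F.card := hcount
    _ ≤ 2 * Module.finrank (ZMod p) S := Nat.mul_le_mul_left _ hFle
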